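/- arXiv:2307.10736 — 2 statements merged into one kernel-verified Lean document; each statement's English description precedes it below -/
import Mathlib

section
/- Fix d ≥ 1, a nonzero vector μ ∈ ℝ^d, σ > 0, and p ∈ (1/2, 1). Let D be the distribution on ℝ^d × {−1,+1} where Y is uniform on {−1,+1}, X given Y=+1 is N(μ, σ²I), and X given Y=−1 is the mixture p·N(−μ, σ²I) + (1−p)·N(3μ, σ²I). Let h^MDA be the classifier that outputs +1 if f(x; μ, σ²I) ≥ p·f(x; −μ, σ²I) and f(x; μ, σ²I) ≥ (1−p)·f(x; 3μ, σ²I), and −1 otherwise, where f(·; m, σ²I) denotes the N(m, σ²I) density. Then Pr_{(X,Y)∼D}[h^MDA(X) ≠ Y] ≤ (1/2)[Φ(−‖μ‖/σ + σ·ln p/(2‖μ‖)) + Φ(−‖μ‖/σ + σ·ln(1−p)/(2‖μ‖)) + p·Φ(−‖μ‖/σ − σ·ln p/(2‖μ‖)) + (1−p)·Φ(−‖μ‖/σ − σ·ln(1−p)/‖μ‖)]. -/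
open MeasureTheory Real Set ProbabilityTheory
open scoped ENNReal RealInnerProductSpace

/-- The standard normal cumulative distribution function
`Φ(z) = ∫_{−∞}^z (1/√(2π)) e^{−u²/2} du`. -/
noncomputable def stdNormCDF (z : ℝ) : ℝ :=
  ∫ u in Set.Iic z, (1 / Real.sqrt (2 * Real.pi)) * Real.exp (-u ^ 2 / 2)
/-- Density of the `d`-dimensional Gaussian `N(m, σ²I)`:
`f(x; m, σ²I) = (2πσ²)^{−d/2} exp(−‖x−m‖²/(2σ²))`. -/
noncomputable def gaussPdf (d : ℕ) (m : EuclideanSpace ℝ (Fin d)) (σ : ℝ)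
    (x : EuclideanSpace ℝ (Fin d)) : ℝ :=
  (2 * Real.pi * σ ^ 2) ^ (-(d : ℝ) / 2) * Real.exp (-‖x - m‖ ^ 2 / (2 * σ ^ 2))

/-- The `d`-dimensional Gaussian measure `N(m, σ²I)` on `ℝ^d`. -/
noncomputable def gauss (d : ℕ) (m : EuclideanSpace ℝ (Fin d)) (σ : ℝ) :
    Measure (EuclideanSpace ℝ (Fin d)) :=
  volume.withDensity fun x => ENNReal.ofReal (gaussPdf d m σ x)
/-- The data-generating distribution `D` on `ℝ^d × {−1,+1}` (labels embedded in `ℝ`):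
`Y` is uniform on `{−1,+1}`, `X | Y=+1 ∼ N(μ, σ²I)`, and
`X | Y=−1 ∼ p·N(−μ, σ²I) + (1−p)·N(3μ, σ²I)`. -/
noncomputable def Dmix (d : ℕ) (μv : EuclideanSpace ℝ (Fin d)) (σ p : ℝ) :
    Measure (EuclideanSpace ℝ (Fin d) × ℝ) :=
  ENNReal.ofReal (1 / 2) • (gauss d μv σ).map (fun x => (x, (1 : ℝ)))
    + ENNReal.ofReal (p / 2) • (gauss d (-μv) σ).map (fun x => (x, (-1 : ℝ)))
    + ENNReal.ofReal ((1 - p) / 2) • (gauss d ((3 : ℝ) • μv) σ).map (fun x => (x, (-1 : ℝ)))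
/-- The MDA classifier: outputs `+1` iff `f(x; μ, σ²I) ≥ p·f(x; −μ, σ²I)` and
`f(x; μ, σ²I) ≥ (1−p)·f(x; 3μ, σ²I)`. -/
noncomputable def hMDA (d : ℕ) (μv : EuclideanSpace ℝ (Fin d)) (σ p : ℝ)
    (x : EuclideanSpace ℝ (Fin d)) : ℝ :=
  if p * gaussPdf d (-μv) σ x ≤ gaussPdf d μv σ x ∧
      (1 - p) * gaussPdf d ((3 : ℝ) • μv) σ x ≤ gaussPdf d μv σ x then 1 else -1

/-! After taking logarithms, both likelihood-ratio tests defining `hMDA` are affine inequalities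
in `⟪μ, x⟫`, so `hMDA x = 1` exactly on the slab
`σ² log p / 2 ≤ ⟪μ, x⟫ ≤ 2‖μ‖² - σ² log (1 - p) / 2`. Writing `N(m, σ²I)` as the image of the
standard Gaussian under `x ↦ m + σ x`, the projection `⟪μ, X⟫` of `X ∼ N(m, σ²I)` is
`N(⟪μ, m⟫, σ²‖μ‖²)`, so each error term is a Gaussian tail: class `+1` errs outside the slab, the
component `N(-μ, σ²I)` of class `-1` above its lower face and the component `N(3μ, σ²I)` below its
upper face. Since `log (1 - p) ≤ 0`, the last tail is at most the weaker term in the bound. -/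

theorem MeasureTheory.lintegral_fin_nat_prod_eq_prod {n : ℕ} {E : Type*}
    {mE : MeasurableSpace E} {μ : Fin n → Measure E} [∀ i, SigmaFinite (μ i)]
    {f : Fin n → E → ℝ≥0∞} (hf : ∀ i, Measurable (f i)) :
    ∫⁻ x : Fin n → E, ∏ i, f i (x i) ∂(Measure.pi μ) = ∏ i, ∫⁻ x, f i x ∂(μ i) := by
  induction n with
  | zero => simp
  | succ n n_ih =>
      calc
        _ = ∫⁻ x : E × (Fin n → E),
            f 0 x.1 * ∏ i : Fin n, f (Fin.succ i) (x.2 i)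
            ∂((μ 0).prod (Measure.pi (fun i ↦ μ i.succ))) := by
          rw [← ((measurePreserving_piFinSuccAbove μ 0).symm).lintegral_comp_emb
            (MeasurableEquiv.measurableEmbedding _)]
          simp_rw [MeasurableEquiv.piFinSuccAbove_symm_apply, Fin.insertNthEquiv,
            Fin.prod_univ_succ, Fin.insertNth_zero, Equiv.coe_fn_mk, Fin.cons_succ,
            Fin.zero_succAbove, cast_eq, Fin.cons_zero]
        _ = (∫⁻ x, f 0 x ∂μ 0)
            * ∏ i : Fin n, ∫⁻ x, f (Fin.succ i) x ∂(μ i.succ) := by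
          rw [← n_ih fun i => hf i.succ, ← lintegral_prod_mul (hf 0).aemeasurable]
          exact (Finset.measurable_prod _ fun i _ =>
            (hf i.succ).comp (measurable_pi_apply i)).aemeasurable
        _ = ∏ i, ∫⁻ x, f i x ∂(μ i) := by rw [Fin.prod_univ_succ]

theorem MeasureTheory.Measure.pi_withDensity {n : ℕ} {E : Type*} {mE : MeasurableSpace E}
    {μ : Fin n → Measure E} [∀ i, SigmaFinite (μ i)] {f : Fin n → E → ℝ≥0∞}
    [∀ i, SigmaFinite ((μ i).withDensity (f i))] (hf : ∀ i, Measurable (f i)) :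
    Measure.pi (fun i => (μ i).withDensity (f i))
      = (Measure.pi μ).withDensity (fun x => ∏ i, f i (x i)) := by
  refine Measure.pi_eq fun s hs => ?_
  rw [withDensity_apply _ (MeasurableSet.univ_pi hs), Measure.restrict_pi_pi,
    lintegral_fin_nat_prod_eq_prod hf]
  exact Finset.prod_congr rfl fun i _ => (withDensity_apply _ (hs i)).symm

lemma gaussPdf_toLp {d : ℕ} (m : EuclideanSpace ℝ (Fin d)) (σ : ℝ) (x : Fin d → ℝ) :
    gaussPdf d m σ (WithLp.toLp 2 x) = ∏ i, gaussianPDFReal (m i) (σ ^ 2).toNNReal (x i) := by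
  have h2πσ : 0 ≤ 2 * π * σ ^ 2 := by positivity
  simp only [gaussianPDFReal, Finset.prod_mul_distrib, Finset.prod_const,
    Finset.card_univ, Fintype.card_fin, ← Real.exp_sum, gaussPdf, EuclideanSpace.norm_sq_eq]
  rw [Real.coe_toNNReal _ (sq_nonneg σ)]
  congr 1
  · rw [Real.sqrt_eq_rpow, ← Real.rpow_neg h2πσ, ← Real.rpow_mul_natCast h2πσ]
    ring_nf
  · rw [← Finset.sum_div, ← Finset.sum_neg_distrib]
    simp [Real.norm_eq_abs, sq_abs]

lemma gauss_eq_map_pi (d : ℕ) (m : EuclideanSpace ℝ (Fin d)) {σ : ℝ} (hσ : σ ≠ 0) :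
    gauss d m σ
      = (Measure.pi fun i => gaussianReal (m i) (σ ^ 2).toNNReal).map (WithLp.toLp 2) := by
  have hv : (σ ^ 2).toNNReal ≠ 0 := by simpa using hσ
  have := fun i => SigmaFinite.withDensity_of_ne_top' (μ := volume)
    fun x => gaussianPDF_ne_top (μ := m i) (v := (σ ^ 2).toNNReal) (x := x)
  simp_rw [gaussianReal_of_var_ne_zero _ hv]
  rw [Measure.pi_withDensity fun i => measurable_gaussianPDF _ _, ← volume_pi]
  ext s hs
  rw [gauss, withDensity_apply _ hs, Measure.map_apply (by fun_prop) hs,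
    withDensity_apply _ (hs.preimage (by fun_prop)),
    ← (PiLp.volume_preserving_toLp (Fin d)).setLIntegral_comp_preimage_emb
      (MeasurableEquiv.toLp 2 _).measurableEmbedding]
  refine setLIntegral_congr_fun (hs.preimage (by fun_prop)) fun x _ => ?_
  rw [gaussPdf_toLp, ENNReal.ofReal_prod_of_nonneg fun i _ => gaussianPDFReal_nonneg _ _ _]
  rfl

lemma ProbabilityTheory.stdGaussian_map_strongDual {E : Type*} [NormedAddCommGroup E]
    [InnerProductSpace ℝ E] [FiniteDimensional ℝ E] [MeasurableSpace E] [BorelSpace E]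
    (L : StrongDual ℝ E) :
    (stdGaussian E).map L = gaussianReal 0 (‖L‖ ^ 2).toNNReal := by
  rw [IsGaussian.map_eq_gaussianReal, integral_strongDual_stdGaussian, variance_dual_stdGaussian]

lemma gaussianReal_eq_map_affine (c s : ℝ) :
    gaussianReal c (s ^ 2).toNNReal = (gaussianReal 0 1).map (fun t => c + s * t) := by
  rw [show (fun t => c + s * t) = (c + ·) ∘ (s * ·) from rfl,
    ← Measure.map_map (by fun_prop) (by fun_prop), gaussianReal_map_const_mul,
    gaussianReal_map_const_add]
  congr 1
  · ring
  · ext; simp [sq_nonneg]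

lemma pi_gaussianReal_eq_map (d : ℕ) (m : Fin d → ℝ) (σ : ℝ) :
    Measure.pi (fun i => gaussianReal (m i) (σ ^ 2).toNNReal)
      = (Measure.pi fun _ => gaussianReal 0 1).map (fun z i => m i + σ * z i) := by
  simp_rw [gaussianReal_eq_map_affine]
  exact (Measure.pi_map_pi fun i => by fun_prop).symm

lemma gauss_eq_map_stdGaussian (d : ℕ) (m : EuclideanSpace ℝ (Fin d)) {σ : ℝ} (hσ : σ ≠ 0) :
    gauss d m σ = (stdGaussian (EuclideanSpace ℝ (Fin d))).map (fun x => m + σ • x) := by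
  rw [gauss_eq_map_pi d m hσ, pi_gaussianReal_eq_map, ← map_pi_eq_stdGaussian,
    Measure.map_map (by fun_prop) (by fun_prop), Measure.map_map (by fun_prop) (by fun_prop)]
  rfl

lemma gauss_map_inner (d : ℕ) (m u : EuclideanSpace ℝ (Fin d)) {σ : ℝ} (hσ : σ ≠ 0) :
    (gauss d m σ).map (fun x => ⟪u, x⟫) = gaussianReal ⟪u, m⟫ ((σ * ‖u‖) ^ 2).toNNReal := by
  have hcomp : (fun x => ⟪u, x⟫) ∘ (fun x => m + σ • x)
      = (· + ⟪u, m⟫) ∘ (σ * ·) ∘ innerSL ℝ u := by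
    ext x; simp [inner_add_right, real_inner_smul_right, add_comm]
  rw [gauss_eq_map_stdGaussian d m hσ, Measure.map_map (by fun_prop) (by fun_prop), hcomp,
    ← Measure.map_map (by fun_prop) (by fun_prop), ← Measure.map_map (by fun_prop) (by fun_prop),
    stdGaussian_map_strongDual, gaussianReal_map_const_mul, gaussianReal_map_add_const]
  congr 1
  · simp
  · rw [mul_pow, Real.toNNReal_mul (sq_nonneg σ), Real.toNNReal_of_nonneg (sq_nonneg σ),
      innerSL_apply_norm]

lemma stdNormCDF_nonneg (z : ℝ) : 0 ≤ stdNormCDF z :=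
  setIntegral_nonneg measurableSet_Iic fun _ _ => by positivity

lemma gaussianReal_Iic_eq_stdNormCDF (z : ℝ) :
    gaussianReal 0 1 (Iic z) = ENNReal.ofReal (stdNormCDF z) := by
  rw [gaussianReal_apply_eq_integral _ one_ne_zero]
  congr 1
  refine setIntegral_congr_fun measurableSet_Iic fun x _ => ?_
  simp [gaussianPDFReal, one_div]

lemma stdNormCDF_mono : Monotone stdNormCDF := fun a b hab => by
  have h := measure_mono (μ := gaussianReal 0 1) (Iic_subset_Iic.mpr hab)
  rwa [gaussianReal_Iic_eq_stdNormCDF, gaussianReal_Iic_eq_stdNormCDF,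
    ENNReal.ofReal_le_ofReal_iff (stdNormCDF_nonneg b)] at h

lemma gaussianReal_Iic (c : ℝ) {s : ℝ} (hs : 0 < s) (q : ℝ) :
    gaussianReal c (s ^ 2).toNNReal (Iic q) = ENNReal.ofReal (stdNormCDF ((q - c) / s)) := by
  rw [gaussianReal_eq_map_affine, Measure.map_apply (by fun_prop) measurableSet_Iic,
    ← gaussianReal_Iic_eq_stdNormCDF]
  congr 1
  ext t
  simp [le_div_iff₀ hs, mul_comm, le_sub_iff_add_le']

lemma gaussianReal_Ici (c : ℝ) {s : ℝ} (hs : 0 < s) (q : ℝ) :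
    gaussianReal c (s ^ 2).toNNReal (Ici q) = ENNReal.ofReal (stdNormCDF ((c - q) / s)) := by
  rw [gaussianReal_eq_map_affine, Measure.map_apply (by fun_prop) measurableSet_Ici,
    ← gaussianReal_Iic_eq_stdNormCDF]
  have hsymm : (gaussianReal 0 1).map (fun t => -t) = gaussianReal 0 1 := by
    simpa using gaussianReal_map_neg (μ := 0) (v := 1)
  conv_rhs => rw [← hsymm, Measure.map_apply (by fun_prop) measurableSet_Iic]
  congr 1
  ext t
  simp only [mem_preimage, mem_Ici, mem_Iic, le_div_iff₀ hs]
  constructor <;> intro h <;> linarith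

lemma gauss_setOf_inner_le (d : ℕ) (m : EuclideanSpace ℝ (Fin d)) {u : EuclideanSpace ℝ (Fin d)}
    (hu : u ≠ 0) {σ : ℝ} (hσ : 0 < σ) (q : ℝ) :
    gauss d m σ {x | ⟪u, x⟫ ≤ q} = ENNReal.ofReal (stdNormCDF ((q - ⟪u, m⟫) / (σ * ‖u‖))) := by
  rw [← gaussianReal_Iic _ (by positivity), ← gauss_map_inner d m u hσ.ne',
    Measure.map_apply (by fun_prop) measurableSet_Iic]
  rfl

lemma gauss_setOf_le_inner (d : ℕ) (m : EuclideanSpace ℝ (Fin d)) {u : EuclideanSpace ℝ (Fin d)}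
    (hu : u ≠ 0) {σ : ℝ} (hσ : 0 < σ) (q : ℝ) :
    gauss d m σ {x | q ≤ ⟪u, x⟫} = ENNReal.ofReal (stdNormCDF ((⟪u, m⟫ - q) / (σ * ‖u‖))) := by
  rw [← gaussianReal_Ici _ (by positivity), ← gauss_map_inner d m u hσ.ne',
    Measure.map_apply (by fun_prop) measurableSet_Ici]
  rfl

lemma mul_gaussPdf_le_gaussPdf_iff {d : ℕ} (m w : EuclideanSpace ℝ (Fin d)) {σ q : ℝ}
    (hσ : σ ≠ 0) (hq : 0 < q) (x : EuclideanSpace ℝ (Fin d)) :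
    q * gaussPdf d w σ x ≤ gaussPdf d m σ x
      ↔ 2 * σ ^ 2 * Real.log q ≤ ‖x - w‖ ^ 2 - ‖x - m‖ ^ 2 := by
  have hσ2 : 0 < 2 * σ ^ 2 := by positivity
  have hC : 0 < (2 * π * σ ^ 2) ^ (-(d : ℝ) / 2) := by positivity
  rw [gaussPdf, gaussPdf, mul_left_comm, mul_le_mul_iff_right₀ hC, ← Real.exp_log hq,
    ← Real.exp_add, Real.exp_le_exp, Real.log_exp, ← sub_nonneg]
  have hdiff : -‖x - m‖ ^ 2 / (2 * σ ^ 2) - (Real.log q + -‖x - w‖ ^ 2 / (2 * σ ^ 2))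
      = (‖x - w‖ ^ 2 - ‖x - m‖ ^ 2 - 2 * σ ^ 2 * Real.log q) / (2 * σ ^ 2) := by
    field_simp
    ring
  rw [hdiff, le_div_iff₀ hσ2, zero_mul, sub_nonneg]

lemma hMDA_ne_neg_one_iff {d : ℕ} (μv : EuclideanSpace ℝ (Fin d)) (σ p : ℝ)
    (x : EuclideanSpace ℝ (Fin d)) : hMDA d μv σ p x ≠ -1 ↔ hMDA d μv σ p x = 1 := by
  unfold hMDA
  split_ifs <;> norm_num

lemma hMDA_eq_one_iff {d : ℕ} (μv : EuclideanSpace ℝ (Fin d)) {σ p : ℝ} (hσ : σ ≠ 0)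
    (hp0 : 0 < p) (hp1 : p < 1) (x : EuclideanSpace ℝ (Fin d)) :
    hMDA d μv σ p x = 1 ↔ σ ^ 2 * Real.log p / 2 ≤ ⟪μv, x⟫
      ∧ ⟪μv, x⟫ ≤ 2 * ‖μv‖ ^ 2 - σ ^ 2 * Real.log (1 - p) / 2 := by
  have hneg : ‖x - -μv‖ ^ 2 - ‖x - μv‖ ^ 2 = 4 * ⟪μv, x⟫ := by
    rw [sub_neg_eq_add, norm_add_sq_real, norm_sub_sq_real, real_inner_comm]
    ring
  have hthree : ‖x - (3 : ℝ) • μv‖ ^ 2 - ‖x - μv‖ ^ 2 = 8 * ‖μv‖ ^ 2 - 4 * ⟪μv, x⟫ := by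
    rw [norm_sub_sq_real, norm_sub_sq_real, real_inner_smul_right, norm_smul, real_inner_comm]
    norm_num
    ring
  simp only [hMDA, mul_gaussPdf_le_gaussPdf_iff _ _ hσ hp0,
    mul_gaussPdf_le_gaussPdf_iff _ _ hσ (sub_pos.2 hp1), hneg, hthree]
  split_ifs with h
  · exact iff_of_true rfl ⟨by linarith [h.1], by linarith [h.2]⟩
  · exact iff_of_false (by norm_num) fun ⟨h1, h2⟩ => h ⟨by linarith, by linarith⟩

lemma Dmix_apply_ne (d : ℕ) (μv : EuclideanSpace ℝ (Fin d)) (σ p : ℝ)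
    (h : EuclideanSpace ℝ (Fin d) → ℝ) :
    Dmix d μv σ p {z | h z.1 ≠ z.2}
      = ENNReal.ofReal (1 / 2) * gauss d μv σ {x | h x ≠ 1}
        + ENNReal.ofReal (p / 2) * gauss d (-μv) σ {x | h x ≠ -1}
        + ENNReal.ofReal ((1 - p) / 2) * gauss d ((3 : ℝ) • μv) σ {x | h x ≠ -1} := by
  simp only [Dmix, Measure.add_apply, Measure.smul_apply, smul_eq_mul,
    (measurableEmbedding_prod_mk_right _).map_apply]
  rfl

lemma toReal_Dmix_apply_ne_le {d : ℕ} {μv : EuclideanSpace ℝ (Fin d)} {σ p : ℝ}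
    (hp0 : 0 ≤ p) (hp1 : p ≤ 1) {h : EuclideanSpace ℝ (Fin d) → ℝ} {e₁ e₂ e₃ : ℝ}
    (he₁ : 0 ≤ e₁) (he₂ : 0 ≤ e₂) (he₃ : 0 ≤ e₃)
    (h₁ : gauss d μv σ {x | h x ≠ 1} ≤ ENNReal.ofReal e₁)
    (h₂ : gauss d (-μv) σ {x | h x ≠ -1} ≤ ENNReal.ofReal e₂)
    (h₃ : gauss d ((3 : ℝ) • μv) σ {x | h x ≠ -1} ≤ ENNReal.ofReal e₃) :
    (Dmix d μv σ p {z | h z.1 ≠ z.2}).toReal ≤ 1 / 2 * e₁ + p / 2 * e₂ + (1 - p) / 2 * e₃ := by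
  have hq0 : 0 ≤ (1 - p) / 2 := by linarith
  refine ENNReal.toReal_le_of_le_ofReal (by positivity) ?_
  rw [Dmix_apply_ne, ENNReal.ofReal_add (by positivity) (by positivity),
    ENNReal.ofReal_add (by positivity) (by positivity), ENNReal.ofReal_mul (by norm_num),
    ENNReal.ofReal_mul (by positivity), ENNReal.ofReal_mul hq0]
  gcongr

lemma gauss_hMDA_ne_one_le {d : ℕ} {μv : EuclideanSpace ℝ (Fin d)} (hμ : μv ≠ 0) {σ p : ℝ}
    (hσ : 0 < σ) (hp0 : 0 < p) (hp1 : p < 1) :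
    gauss d μv σ {x | hMDA d μv σ p x ≠ 1}
      ≤ ENNReal.ofReal (stdNormCDF (-‖μv‖ / σ + σ * Real.log p / (2 * ‖μv‖))
        + stdNormCDF (-‖μv‖ / σ + σ * Real.log (1 - p) / (2 * ‖μv‖))) := by
  have hμ0 : 0 < ‖μv‖ := norm_pos_iff.2 hμ
  calc gauss d μv σ {x | hMDA d μv σ p x ≠ 1}
      ≤ gauss d μv σ ({x | ⟪μv, x⟫ ≤ σ ^ 2 * Real.log p / 2}
          ∪ {x | 2 * ‖μv‖ ^ 2 - σ ^ 2 * Real.log (1 - p) / 2 ≤ ⟪μv, x⟫}) := by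
        refine measure_mono fun x hx => ?_
        rcases not_and_or.1 (mt (hMDA_eq_one_iff μv hσ.ne' hp0 hp1 x).2 hx) with hx | hx
        exacts [Or.inl (not_le.1 hx).le, Or.inr (not_le.1 hx).le]
    _ ≤ gauss d μv σ {x | ⟪μv, x⟫ ≤ σ ^ 2 * Real.log p / 2}
          + gauss d μv σ {x | 2 * ‖μv‖ ^ 2 - σ ^ 2 * Real.log (1 - p) / 2 ≤ ⟪μv, x⟫} :=
        measure_union_le _ _
    _ = _ := by
        rw [gauss_setOf_inner_le d μv hμ hσ, gauss_setOf_le_inner d μv hμ hσ,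
          ← ENNReal.ofReal_add (stdNormCDF_nonneg _) (stdNormCDF_nonneg _),
          real_inner_self_eq_norm_sq]
        congr 3 <;> field_simp <;> ring

lemma gauss_neg_hMDA_ne_neg_one_le {d : ℕ} {μv : EuclideanSpace ℝ (Fin d)} (hμ : μv ≠ 0)
    {σ p : ℝ} (hσ : 0 < σ) (hp0 : 0 < p) (hp1 : p < 1) :
    gauss d (-μv) σ {x | hMDA d μv σ p x ≠ -1}
      ≤ ENNReal.ofReal (stdNormCDF (-‖μv‖ / σ - σ * Real.log p / (2 * ‖μv‖))) := by
  have hμ0 : 0 < ‖μv‖ := norm_pos_iff.2 hμ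
  calc gauss d (-μv) σ {x | hMDA d μv σ p x ≠ -1}
      ≤ gauss d (-μv) σ {x | σ ^ 2 * Real.log p / 2 ≤ ⟪μv, x⟫} := measure_mono fun x hx =>
        ((hMDA_eq_one_iff μv hσ.ne' hp0 hp1 x).1 ((hMDA_ne_neg_one_iff _ _ _ x).1 hx)).1
    _ = _ := by
        rw [gauss_setOf_le_inner d _ hμ hσ, inner_neg_right, real_inner_self_eq_norm_sq]
        congr 2
        field_simp

lemma gauss_three_smul_hMDA_ne_neg_one_le {d : ℕ} {μv : EuclideanSpace ℝ (Fin d)} (hμ : μv ≠ 0)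
    {σ p : ℝ} (hσ : 0 < σ) (hp0 : 0 < p) (hp1 : p < 1) :
    gauss d ((3 : ℝ) • μv) σ {x | hMDA d μv σ p x ≠ -1}
      ≤ ENNReal.ofReal (stdNormCDF (-‖μv‖ / σ - σ * Real.log (1 - p) / (2 * ‖μv‖))) := by
  have hμ0 : 0 < ‖μv‖ := norm_pos_iff.2 hμ
  calc gauss d ((3 : ℝ) • μv) σ {x | hMDA d μv σ p x ≠ -1}
      ≤ gauss d ((3 : ℝ) • μv) σ {x | ⟪μv, x⟫ ≤ 2 * ‖μv‖ ^ 2 - σ ^ 2 * Real.log (1 - p) / 2} :=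
        measure_mono fun x hx =>
          ((hMDA_eq_one_iff μv hσ.ne' hp0 hp1 x).1 ((hMDA_ne_neg_one_iff _ _ _ x).1 hx)).2
    _ = _ := by
        rw [gauss_setOf_inner_le d _ hμ hσ, real_inner_smul_right, real_inner_self_eq_norm_sq]
        congr 2
        field_simp
        ring

theorem mda_error_bound_general (d : ℕ) (μv : EuclideanSpace ℝ (Fin d)) (hμ : μv ≠ 0)
    (σ p : ℝ) (hσ : 0 < σ) (hp1 : 1 / 2 < p) (hp2 : p < 1) :
    ((Dmix d μv σ p) {z | hMDA d μv σ p z.1 ≠ z.2}).toReal ≤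
      (1 / 2) * (stdNormCDF (-‖μv‖ / σ + σ * Real.log p / (2 * ‖μv‖))
        + stdNormCDF (-‖μv‖ / σ + σ * Real.log (1 - p) / (2 * ‖μv‖))
        + p * stdNormCDF (-‖μv‖ / σ - σ * Real.log p / (2 * ‖μv‖))
        + (1 - p) * stdNormCDF (-‖μv‖ / σ - σ * Real.log (1 - p) / ‖μv‖)) := by
  have hp0 : 0 < p := by linarith
  have hlog : σ * Real.log (1 - p) / (2 * ‖μv‖) ≤ 0 :=
    div_nonpos_of_nonpos_of_nonneg
      (mul_nonpos_of_nonneg_of_nonpos hσ.le (Real.log_nonpos (by linarith) (by linarith)))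
      (by positivity)
  have hweaken : stdNormCDF (-‖μv‖ / σ - σ * Real.log (1 - p) / (2 * ‖μv‖))
      ≤ stdNormCDF (-‖μv‖ / σ - σ * Real.log (1 - p) / ‖μv‖) := by
    refine stdNormCDF_mono ?_
    have htwice : σ * Real.log (1 - p) / ‖μv‖ = 2 * (σ * Real.log (1 - p) / (2 * ‖μv‖)) := by
      field_simp
    linarith
  refine (toReal_Dmix_apply_ne_le hp0.le hp2.le
    (add_nonneg (stdNormCDF_nonneg _) (stdNormCDF_nonneg _)) (stdNormCDF_nonneg _)
    (stdNormCDF_nonneg _) (gauss_hMDA_ne_one_le hμ hσ hp0 hp2)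
    (gauss_neg_hMDA_ne_neg_one_le hμ hσ hp0 hp2)
    ((gauss_three_smul_hMDA_ne_neg_one_le hμ hσ hp0 hp2).trans
      (ENNReal.ofReal_le_ofReal hweaken))).trans_eq (by ring)

/-- Upper bound on the misclassification error of the ideal MDA classifier under
the Gaussian-mixture data model `D`. -/
theorem mda_error_bound (d : ℕ) (hd : 1 ≤ d) (μv : EuclideanSpace ℝ (Fin d)) (hμ : μv ≠ 0)
    (σ p : ℝ) (hσ : 0 < σ) (hp1 : 1 / 2 < p) (hp2 : p < 1) :
    ((Dmix d μv σ p) {z | hMDA d μv σ p z.1 ≠ z.2}).toReal ≤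
      (1 / 2) * (stdNormCDF (-‖μv‖ / σ + σ * Real.log p / (2 * ‖μv‖))
        + stdNormCDF (-‖μv‖ / σ + σ * Real.log (1 - p) / (2 * ‖μv‖))
        + p * stdNormCDF (-‖μv‖ / σ - σ * Real.log p / (2 * ‖μv‖))
        + (1 - p) * stdNormCDF (-‖μv‖ / σ - σ * Real.log (1 - p) / ‖μv‖)) :=
  mda_error_bound_general d μv hμ σ p hσ hp1 hp2
end

section
/- Fix d ≥ 1, a nonzero vector μ ∈ ℝ^d, σ > 0, and p ∈ (1/2, 1). Let D be the distribution on ℝ^d × {−1,+1} where Y is uniform on {−1,+1}, X given Y=+1 is N(μ, σ²I), and X given Y=−1 is the mixture p·N(−μ, σ²I) + (1−p)·N(3μ, σ²I). Let h^LDA be the classifier that outputs +1 iff ‖x − μ‖ ≤ ‖x + (4p−3)μ‖, and let h^MDA be the classifier that outputs +1 iff f(x; μ, σ²I) ≥ p·f(x; −μ, σ²I) and f(x; μ, σ²I) ≥ (1−p)·f(x; 3μ, σ²I), where f(·; m, σ²I) is the N(m, σ²I) density. Then Pr_{(X,Y)∼D}[h^LDA(X) ≠ Y] − Pr_{(X,Y)∼D}[h^MDA(X)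 ≠ Y] ≥ (1−p)/2 − exp(−‖μ‖²/(2σ²)). -/
open MeasureTheory Real Set ProbabilityTheory
open scoped ENNReal RealInnerProductSpace

/-- The LDA classifier with centers `μ` and `μ₋ = −(4p−3)μ`: outputs `+1`
iff `‖x − μ‖ ≤ ‖x − μ₋‖`. -/
noncomputable def hLDA (d : ℕ) (μv : EuclideanSpace ℝ (Fin d)) (p : ℝ)
    (x : EuclideanSpace ℝ (Fin d)) : ℝ :=
  if ‖x - μv‖ ≤ ‖x - (-(4 * p - 3)) • μv‖ then 1 else -1
/-!
Write `f₊ = f(·; μ)`, `f₋ = f(·; −μ)`, `f₃ = f(·; 3μ)`, and let `A = {p f₋ ≤ f₊}`,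
`B = {(1−p) f₃ ≤ f₊}` (so MDA predicts `+1` on `A ∩ B`) and `C` the LDA region, which is the
half-space `{⟪x, μ⟫ ≥ 2(1−p)‖μ‖²}`. Then `Bᶜ ⊆ C ⊆ A`, so the two classifiers disagree only on
`Bᶜ` and on `A \ C`. On `A \ C` the MDA answer is the better one, since `p f₋ ≤ f₊` there. On `Bᶜ`
LDA misclassifies almost all of the `3μ` component, which has weight `(1−p)/2`. Every remaining
term is exponentially small, by comparison with `f(·; 2μ)`: up to the factor
`e^{−‖μ‖²/(2σ²)}`, `f(·; 2μ)` is the geometric mean of `f₊` and `f₃`, whence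
`min(f₊, (1−p) f₃) ≤ √(1−p) e^{−‖μ‖²/(2σ²)} f(·; 2μ)`; and off `C`,
`f₃ ≤ e^{−‖μ‖²/(2σ²)} f(·; 2μ)`.
-/

lemma min_le_of_mul_eq_sq {u v w : ℝ} (hu : 0 ≤ u) (hv : 0 ≤ v) (hw : 0 ≤ w)
    (h : u * v = w ^ 2) : min u v ≤ w := by
  by_contra! hlt
  have := mul_self_lt_mul_self hw hlt
  nlinarith [mul_le_mul (min_le_left u v) (min_le_right u v) (le_min hu hv) hu]

lemma Set.sdiff_inter_eq_compl {α : Type*} {s t u : Set α} (hst : s ⊆ t) (hus : uᶜ ⊆ s) :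
    s \ (t ∩ u) = uᶜ :=
  Set.ext fun _ ↦ ⟨fun hx hu ↦ hx.2 ⟨hst hx.1, hu⟩, fun hx ↦ ⟨hus hx, fun h ↦ hx h.2⟩⟩

lemma Set.inter_sdiff_eq_sdiff {α : Type*} {s t u : Set α} (hus : uᶜ ⊆ s) :
    (t ∩ u) \ s = t \ s :=
  Set.ext fun _ ↦ ⟨fun hx ↦ ⟨hx.1.1, hx.2⟩, fun hx ↦
    ⟨⟨hx.1, by_contra fun hu ↦ hx.2 (hus hu)⟩, hx.2⟩⟩

lemma measureReal_sub_measureReal {α : Type*} [MeasurableSpace α] {ν : Measure α}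
    [IsFiniteMeasure ν] {S T : Set α} (hS : MeasurableSet S) (hT : MeasurableSet T) :
    ν.real S - ν.real T = ν.real (S \ T) - ν.real (T \ S) := by
  have hS' := measureReal_sdiff_add_inter (μ := ν) (s := S) hT
  have hT' := measureReal_sdiff_add_inter (μ := ν) (s := T) hS
  rw [inter_comm] at hT'
  linarith

section Geometry

variable {E : Type*} [NormedAddCommGroup E] [InnerProductSpace ℝ E]

lemma norm_sub_smul_sq (x μ : E) (s : ℝ) :
    ‖x - s • μ‖ ^ 2 = ‖x‖ ^ 2 - 2 * s * ⟪x, μ⟫ + s ^ 2 * ‖μ‖ ^ 2 := by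
  rw [norm_sub_sq_real, real_inner_smul_right, norm_smul, mul_pow, Real.norm_eq_abs, sq_abs]
  ring

lemma norm_sub_smul_le_norm_sub_smul_iff (x μ : E) (s t : ℝ) :
    ‖x - s • μ‖ ≤ ‖x - t • μ‖ ↔ (s ^ 2 - t ^ 2) * ‖μ‖ ^ 2 ≤ 2 * (s - t) * ⟪x, μ⟫ := by
  rw [← sq_le_sq₀ (norm_nonneg _) (norm_nonneg _), norm_sub_smul_sq, norm_sub_smul_sq]
  constructor <;> intro h <;> linarith

def ldaRegion (μ : E) (p : ℝ) : Set E := {x | ‖x - μ‖ ≤ ‖x - (-(4 * p - 3)) • μ‖}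

lemma mem_ldaRegion_iff {p : ℝ} (hp : 1 / 2 < p) {x μ : E} :
    x ∈ ldaRegion μ p ↔ 2 * (1 - p) * ‖μ‖ ^ 2 ≤ ⟪x, μ⟫ := by
  have key := norm_sub_smul_le_norm_sub_smul_iff x μ 1 (-(4 * p - 3))
  rw [one_smul] at key
  have h2p : 0 < 2 * p - 1 := by linarith
  exact key.trans ⟨fun h ↦ by nlinarith, fun h ↦ by nlinarith⟩

lemma measurableSet_ldaRegion [MeasurableSpace E] [OpensMeasurableSpace E] (μ : E) (p : ℝ) :
    MeasurableSet (ldaRegion μ p) :=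
  (isClosed_le (by fun_prop) (by fun_prop)).measurableSet

end Geometry

section Gaussian

variable {d : ℕ} {σ : ℝ}

lemma gaussPdf_nonneg (m x : EuclideanSpace ℝ (Fin d)) : 0 ≤ gaussPdf d m σ x := by
  unfold gaussPdf; positivity

@[fun_prop]
lemma continuous_gaussPdf (m : EuclideanSpace ℝ (Fin d)) : Continuous (gaussPdf d m σ) := by
  unfold gaussPdf; fun_prop

lemma gaussPdf_eq_exp_mul (a b x : EuclideanSpace ℝ (Fin d)) :
    gaussPdf d a σ x = exp ((‖x - b‖ ^ 2 - ‖x - a‖ ^ 2) / (2 * σ ^ 2)) * gaussPdf d b σ x := by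
  unfold gaussPdf
  rw [mul_left_comm, ← exp_add]
  ring_nf

lemma gaussPdf_le_gaussPdf_iff (hσ : 0 < σ) {a b x : EuclideanSpace ℝ (Fin d)} :
    gaussPdf d a σ x ≤ gaussPdf d b σ x ↔ ‖x - b‖ ≤ ‖x - a‖ := by
  unfold gaussPdf
  rw [mul_le_mul_iff_right₀ (by positivity), exp_le_exp,
    div_le_div_iff_of_pos_right (by positivity), neg_le_neg_iff,
    sq_le_sq₀ (norm_nonneg _) (norm_nonneg _)]

lemma gaussPdf_sub_mul_gaussPdf_add (a h x : EuclideanSpace ℝ (Fin d)) :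
    gaussPdf d (a - h) σ x * gaussPdf d (a + h) σ x =
      (exp (-‖h‖ ^ 2 / (2 * σ ^ 2)) * gaussPdf d a σ x) ^ 2 := by
  have hexp : exp ((‖x - a‖ ^ 2 - ‖x - (a - h)‖ ^ 2) / (2 * σ ^ 2)) *
      exp ((‖x - a‖ ^ 2 - ‖x - (a + h)‖ ^ 2) / (2 * σ ^ 2)) =
      exp (-‖h‖ ^ 2 / (2 * σ ^ 2)) ^ 2 := by
    have hpar := parallelogram_law_with_norm ℝ (x - a) h
    rw [sub_sub_eq_add_sub, add_sub_right_comm, ← sub_sub, ← exp_add, ← exp_nat_mul,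
      ← add_div, ← mul_div_assoc]
    congr 2
    push_cast
    linarith
  rw [gaussPdf_eq_exp_mul (a - h) a, gaussPdf_eq_exp_mul (a + h) a]
  linear_combination gaussPdf d a σ x ^ 2 * hexp

lemma integral_gaussPdf (hσ : 0 < σ) (m : EuclideanSpace ℝ (Fin d)) :
    ∫ x, gaussPdf d m σ x = 1 := by
  have hfr : (Module.finrank ℝ (EuclideanSpace ℝ (Fin d)) : ℝ) = d := by simp
  have hexp (x : EuclideanSpace ℝ (Fin d)) :
      -‖x - m‖ ^ 2 / (2 * σ ^ 2) = -(2 * σ ^ 2)⁻¹ * ‖x - m‖ ^ 2 := by ring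
  simp_rw [gaussPdf, integral_const_mul, hexp]
  rw [integral_sub_right_eq_self (fun v ↦ rexp (-(2 * σ ^ 2)⁻¹ * ‖v‖ ^ 2)) m,
    GaussianFourier.integral_rexp_neg_mul_sq_norm (by positivity), hfr,
    div_inv_eq_mul, mul_comm π, mul_right_comm 2, ← rpow_add (by positivity), neg_div,
    neg_add_cancel, rpow_zero]

lemma integrable_gaussPdf (hσ : 0 < σ) (m : EuclideanSpace ℝ (Fin d)) :
    Integrable (gaussPdf d m σ) :=
  .of_integral_ne_zero (by rw [integral_gaussPdf hσ m]; exact one_ne_zero)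

lemma gauss_apply_eq_ofReal_setIntegral (hσ : 0 < σ) (m : EuclideanSpace ℝ (Fin d))
    {S : Set (EuclideanSpace ℝ (Fin d))} (hS : MeasurableSet S) :
    gauss d m σ S = ENNReal.ofReal (∫ x in S, gaussPdf d m σ x) := by
  rw [gauss, withDensity_apply _ hS, ofReal_integral_eq_lintegral_ofReal
    (integrable_gaussPdf hσ m).integrableOn (.of_forall fun x ↦ gaussPdf_nonneg m x)]

lemma isProbabilityMeasure_gauss (hσ : 0 < σ) (m : EuclideanSpace ℝ (Fin d)) :
    IsProbabilityMeasure (gauss d m σ) :=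
  ⟨by rw [gauss_apply_eq_ofReal_setIntegral hσ m .univ, setIntegral_univ,
    integral_gaussPdf hσ m, ENNReal.ofReal_one]⟩

lemma gauss_real_eq_setIntegral (hσ : 0 < σ) (m : EuclideanSpace ℝ (Fin d))
    {S : Set (EuclideanSpace ℝ (Fin d))} (hS : MeasurableSet S) :
    (gauss d m σ).real S = ∫ x in S, gaussPdf d m σ x := by
  rw [measureReal_def, gauss_apply_eq_ofReal_setIntegral hσ m hS,
    ENNReal.toReal_ofReal (setIntegral_nonneg hS fun x _ ↦ gaussPdf_nonneg m x)]

lemma mul_gauss_real_le_mul_gauss_real (hσ : 0 < σ) {c c' : ℝ}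
    {a b : EuclideanSpace ℝ (Fin d)} {S : Set (EuclideanSpace ℝ (Fin d))} (hS : MeasurableSet S)
    (h : ∀ x ∈ S, c * gaussPdf d a σ x ≤ c' * gaussPdf d b σ x) :
    c * (gauss d a σ).real S ≤ c' * (gauss d b σ).real S := by
  rw [gauss_real_eq_setIntegral hσ a hS, gauss_real_eq_setIntegral hσ b hS,
    ← integral_const_mul, ← integral_const_mul]
  exact setIntegral_mono_on ((integrable_gaussPdf hσ a).integrableOn.const_mul c)
    ((integrable_gaussPdf hσ b).integrableOn.const_mul c') hS h

lemma mul_gauss_real_le (hσ : 0 < σ) {c c' : ℝ} (hc' : 0 ≤ c')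
    {a b : EuclideanSpace ℝ (Fin d)} {S : Set (EuclideanSpace ℝ (Fin d))} (hS : MeasurableSet S)
    (h : ∀ x ∈ S, c * gaussPdf d a σ x ≤ c' * gaussPdf d b σ x) :
    c * (gauss d a σ).real S ≤ c' := by
  have := isProbabilityMeasure_gauss hσ b
  calc c * (gauss d a σ).real S ≤ c' * (gauss d b σ).real S :=
        mul_gauss_real_le_mul_gauss_real hσ hS h
    _ ≤ c' := mul_le_of_le_one_right hc' measureReal_le_one

end Gaussian

section Regions

variable {d : ℕ} {σ p : ℝ} {μ : EuclideanSpace ℝ (Fin d)}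

def mdaNegRegion (d : ℕ) (μ : EuclideanSpace ℝ (Fin d)) (σ p : ℝ) :
    Set (EuclideanSpace ℝ (Fin d)) :=
  {x | p * gaussPdf d (-μ) σ x ≤ gaussPdf d μ σ x}

def mdaThreeRegion (d : ℕ) (μ : EuclideanSpace ℝ (Fin d)) (σ p : ℝ) :
    Set (EuclideanSpace ℝ (Fin d)) :=
  {x | (1 - p) * gaussPdf d ((3 : ℝ) • μ) σ x ≤ gaussPdf d μ σ x}

lemma measurableSet_mdaNegRegion (d : ℕ) (μ : EuclideanSpace ℝ (Fin d)) (σ p : ℝ) :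
    MeasurableSet (mdaNegRegion d μ σ p) :=
  measurableSet_le (by fun_prop) (by fun_prop)

lemma measurableSet_mdaThreeRegion (d : ℕ) (μ : EuclideanSpace ℝ (Fin d)) (σ p : ℝ) :
    MeasurableSet (mdaThreeRegion d μ σ p) :=
  measurableSet_le (by fun_prop) (by fun_prop)

lemma ldaRegion_subset_mdaNegRegion (hσ : 0 < σ) (hp1 : 1 / 2 < p) (hp2 : p ≤ 1) :
    ldaRegion μ p ⊆ mdaNegRegion d μ σ p := by
  intro x hx
  rw [mem_ldaRegion_iff hp1] at hx
  have hneg : gaussPdf d (-μ) σ x ≤ gaussPdf d μ σ x := by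
    rw [gaussPdf_le_gaussPdf_iff hσ, ← one_smul ℝ μ, ← neg_smul,
      norm_sub_smul_le_norm_sub_smul_iff]
    nlinarith
  exact (mul_le_of_le_one_left (gaussPdf_nonneg _ _) hp2).trans hneg

lemma compl_mdaThreeRegion_subset_ldaRegion (hσ : 0 < σ) (hp1 : 1 / 2 < p) :
    (mdaThreeRegion d μ σ p)ᶜ ⊆ ldaRegion μ p := by
  intro x hx
  have hlt : ¬ gaussPdf d ((3 : ℝ) • μ) σ x ≤ gaussPdf d μ σ x := fun h ↦ hx <|
    (mul_le_of_le_one_left (gaussPdf_nonneg _ _) (by linarith)).trans h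
  have key := norm_sub_smul_le_norm_sub_smul_iff x μ 1 3
  rw [one_smul] at key
  rw [gaussPdf_le_gaussPdf_iff hσ, key] at hlt
  rw [mem_ldaRegion_iff hp1]
  nlinarith [sq_nonneg ‖μ‖]

lemma gaussPdf_three_smul_le_of_notMem_ldaRegion (hp1 : 1 / 2 < p)
    {x : EuclideanSpace ℝ (Fin d)} (hx : x ∉ ldaRegion μ p) :
    gaussPdf d ((3 : ℝ) • μ) σ x ≤
      exp (-‖μ‖ ^ 2 / (2 * σ ^ 2)) * gaussPdf d ((2 : ℝ) • μ) σ x := by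
  rw [mem_ldaRegion_iff hp1] at hx
  rw [gaussPdf_eq_exp_mul _ ((2 : ℝ) • μ)]
  refine mul_le_mul_of_nonneg_right (exp_le_exp.2 ?_) (gaussPdf_nonneg _ _)
  refine div_le_div_of_nonneg_right ?_ (by positivity)
  rw [norm_sub_smul_sq, norm_sub_smul_sq]
  nlinarith [sq_nonneg ‖μ‖]

lemma min_gaussPdf_mul_gaussPdf_three_smul_le {c : ℝ} (hc : 0 ≤ c)
    (x : EuclideanSpace ℝ (Fin d)) :
    min (gaussPdf d μ σ x) (c * gaussPdf d ((3 : ℝ) • μ) σ x) ≤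
      (√c * exp (-‖μ‖ ^ 2 / (2 * σ ^ 2))) * gaussPdf d ((2 : ℝ) • μ) σ x := by
  have hprod := gaussPdf_sub_mul_gaussPdf_add (σ := σ) ((2 : ℝ) • μ) μ x
  rw [show (2 : ℝ) • μ - μ = μ by module, show (2 : ℝ) • μ + μ = (3 : ℝ) • μ by module] at hprod
  refine min_le_of_mul_eq_sq (gaussPdf_nonneg _ _) (mul_nonneg hc (gaussPdf_nonneg _ _))
    (by have := gaussPdf_nonneg (σ := σ) ((2 : ℝ) • μ) x; positivity) ?_
  rw [mul_left_comm, hprod, mul_assoc, mul_pow √c, sq_sqrt hc]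

lemma mul_gauss_neg_real_le (hσ : 0 < σ) {S : Set (EuclideanSpace ℝ (Fin d))}
    (hS : MeasurableSet S) (hSA : S ⊆ mdaNegRegion d μ σ p) :
    p * (gauss d (-μ) σ).real S ≤ (gauss d μ σ).real S := by
  simpa only [one_mul] using mul_gauss_real_le_mul_gauss_real (c' := 1) hσ hS
    fun x hx ↦ (hSA hx).trans_eq (one_mul _).symm

lemma gauss_real_compl_mdaThreeRegion_le (hσ : 0 < σ) (hp : p ≤ 1) :
    (gauss d μ σ).real (mdaThreeRegion d μ σ p)ᶜ ≤ √(1 - p) * exp (-‖μ‖ ^ 2 / (2 * σ ^ 2)) := by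
  refine (one_mul _).symm.trans_le <| mul_gauss_real_le (b := (2 : ℝ) • μ) hσ (by positivity)
    (measurableSet_mdaThreeRegion d μ σ p).compl fun x hx ↦ ?_
  have hlt : gaussPdf d μ σ x < (1 - p) * gaussPdf d ((3 : ℝ) • μ) σ x := not_le.1 hx
  rw [one_mul, ← min_eq_left hlt.le]
  exact min_gaussPdf_mul_gaussPdf_three_smul_le (by linarith) x

lemma mul_gauss_three_smul_real_mdaThreeRegion_le (hσ : 0 < σ) (hp : p ≤ 1) :
    (1 - p) * (gauss d ((3 : ℝ) • μ) σ).real (mdaThreeRegion d μ σ p) ≤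
      √(1 - p) * exp (-‖μ‖ ^ 2 / (2 * σ ^ 2)) :=
  mul_gauss_real_le (b := (2 : ℝ) • μ) hσ (by positivity) (measurableSet_mdaThreeRegion d μ σ p)
    fun x hx ↦ (min_eq_right hx).symm.trans_le
      (min_gaussPdf_mul_gaussPdf_three_smul_le (by linarith) x)

lemma gauss_three_smul_real_compl_ldaRegion_le (hσ : 0 < σ) (hp1 : 1 / 2 < p) :
    (gauss d ((3 : ℝ) • μ) σ).real (ldaRegion μ p)ᶜ ≤ exp (-‖μ‖ ^ 2 / (2 * σ ^ 2)) := by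
  refine (one_mul _).symm.trans_le <| mul_gauss_real_le (b := (2 : ℝ) • μ) hσ (by positivity)
    (measurableSet_ldaRegion μ p).compl fun x hx ↦ ?_
  rw [one_mul]
  exact gaussPdf_three_smul_le_of_notMem_ldaRegion hp1 hx

end Regions

section Error

variable {d : ℕ}

noncomputable def regionError (d : ℕ) (μ : EuclideanSpace ℝ (Fin d)) (σ p : ℝ)
    (S : Set (EuclideanSpace ℝ (Fin d))) : ℝ :=
  1 / 2 * (gauss d μ σ).real Sᶜ + p / 2 * (gauss d (-μ) σ).real S
    + (1 - p) / 2 * (gauss d ((3 : ℝ) • μ) σ).real S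

lemma Dmix_misclassified_eq_regionError {σ p : ℝ} (hσ : 0 < σ) (hp0 : 0 ≤ p) (hp1 : p ≤ 1)
    (μ : EuclideanSpace ℝ (Fin d)) {h : EuclideanSpace ℝ (Fin d) → ℝ}
    {S : Set (EuclideanSpace ℝ (Fin d))} (hS : MeasurableSet S)
    (hpos : ∀ x ∈ S, h x = 1) (hneg : ∀ x ∉ S, h x = -1) :
    (Dmix d μ σ p {z | h z.1 ≠ z.2}).toReal = regionError d μ σ p S := by
  classical
  have := isProbabilityMeasure_gauss hσ μ
  have := isProbabilityMeasure_gauss hσ (-μ)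
  have := isProbabilityMeasure_gauss hσ ((3 : ℝ) • μ)
  have h_eq : h = fun x ↦ if x ∈ S then 1 else -1 := by
    ext x; split_ifs with hx; exacts [hpos x hx, hneg x hx]
  have hh : Measurable h := by
    rw [h_eq]; exact measurable_const.ite hS measurable_const
  have hmeas : MeasurableSet {z : EuclideanSpace ℝ (Fin d) × ℝ | h z.1 ≠ z.2} :=
    (measurableSet_eq_fun (hh.comp measurable_fst) measurable_snd).compl
  have pre_one : (fun x ↦ (x, (1 : ℝ))) ⁻¹' {z | h z.1 ≠ z.2} = Sᶜ := by
    ext x; by_cases hx : x ∈ S <;> norm_num [hx, hpos, hneg]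
  have pre_neg_one : (fun x ↦ (x, (-1 : ℝ))) ⁻¹' {z | h z.1 ≠ z.2} = S := by
    ext x; by_cases hx : x ∈ S <;> norm_num [hx, hpos, hneg]
  simp only [Dmix, Measure.add_apply, Measure.smul_apply, smul_eq_mul,
    Measure.map_apply measurable_prodMk_right hmeas, pre_one, pre_neg_one]
  rw [ENNReal.toReal_add (by finiteness) (by finiteness),
    ENNReal.toReal_add (by finiteness) (by finiteness), ENNReal.toReal_mul, ENNReal.toReal_mul,
    ENNReal.toReal_mul, ENNReal.toReal_ofReal (by norm_num), ENNReal.toReal_ofReal (by linarith),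
    ENNReal.toReal_ofReal (by linarith)]
  rfl

lemma regionError_sub_regionError {σ : ℝ} (hσ : 0 < σ) (μ : EuclideanSpace ℝ (Fin d)) (p : ℝ)
    {S T : Set (EuclideanSpace ℝ (Fin d))} (hS : MeasurableSet S) (hT : MeasurableSet T) :
    regionError d μ σ p S - regionError d μ σ p T =
      1 / 2 * ((gauss d μ σ).real (T \ S) - (gauss d μ σ).real (S \ T))
      + p / 2 * ((gauss d (-μ) σ).real (S \ T) - (gauss d (-μ) σ).real (T \ S))
      + (1 - p) / 2 * ((gauss d ((3 : ℝ) • μ) σ).real (S \ T)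
        - (gauss d ((3 : ℝ) • μ) σ).real (T \ S)) := by
  have := isProbabilityMeasure_gauss hσ μ
  have := isProbabilityMeasure_gauss hσ (-μ)
  have := isProbabilityMeasure_gauss hσ ((3 : ℝ) • μ)
  unfold regionError
  rw [probReal_compl_eq_one_sub hS, probReal_compl_eq_one_sub hT]
  linear_combination (-1 / 2 : ℝ) * measureReal_sub_measureReal (ν := gauss d μ σ) hS hT
    + p / 2 * measureReal_sub_measureReal (ν := gauss d (-μ) σ) hS hT
    + (1 - p) / 2 * measureReal_sub_measureReal (ν := gauss d ((3 : ℝ) • μ) σ) hS hT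

end Error

lemma lda_error_sub_mda_error {d : ℕ} {σ p : ℝ} (hσ : 0 < σ) (hp1 : 1 / 2 < p) (hp2 : p ≤ 1)
    (μ : EuclideanSpace ℝ (Fin d)) :
    (Dmix d μ σ p {z | hLDA d μ p z.1 ≠ z.2}).toReal
        - (Dmix d μ σ p {z | hMDA d μ σ p z.1 ≠ z.2}).toReal =
      1 / 2 * ((gauss d μ σ).real (mdaNegRegion d μ σ p \ ldaRegion μ p)
        - (gauss d μ σ).real (mdaThreeRegion d μ σ p)ᶜ)
      + p / 2 * ((gauss d (-μ) σ).real (mdaThreeRegion d μ σ p)ᶜ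
        - (gauss d (-μ) σ).real (mdaNegRegion d μ σ p \ ldaRegion μ p))
      + (1 - p) / 2 * ((gauss d ((3 : ℝ) • μ) σ).real (mdaThreeRegion d μ σ p)ᶜ
        - (gauss d ((3 : ℝ) • μ) σ).real (mdaNegRegion d μ σ p \ ldaRegion μ p)) := by
  have mA := measurableSet_mdaNegRegion d μ σ p
  have mB := measurableSet_mdaThreeRegion d μ σ p
  have mC := measurableSet_ldaRegion μ p
  have hBC := compl_mdaThreeRegion_subset_ldaRegion (μ := μ) hσ hp1
  rw [Dmix_misclassified_eq_regionError (h := hLDA d μ p) hσ (by linarith) hp2 μ mC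
      (fun x hx ↦ if_pos hx) (fun x hx ↦ if_neg hx),
    Dmix_misclassified_eq_regionError (h := hMDA d μ σ p) hσ (by linarith) hp2 μ
      (mA.inter mB) (fun x hx ↦ if_pos hx) (fun x hx ↦ if_neg hx),
    regionError_sub_regionError hσ μ p mC (mA.inter mB),
    Set.sdiff_inter_eq_compl (ldaRegion_subset_mdaNegRegion hσ hp1 hp2) hBC,
    Set.inter_sdiff_eq_sdiff hBC]

theorem lda_mda_gap_general (d : ℕ) (μv : EuclideanSpace ℝ (Fin d))
    (σ p : ℝ) (hσ : 0 < σ) (hp1 : 1 / 2 < p) (hp2 : p < 1) :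
    ((Dmix d μv σ p) {z | hLDA d μv p z.1 ≠ z.2}).toReal
        - ((Dmix d μv σ p) {z | hMDA d μv σ p z.1 ≠ z.2}).toReal ≥
      (1 - p) / 2 - Real.exp (-‖μv‖ ^ 2 / (2 * σ ^ 2)) := by
  have := isProbabilityMeasure_gauss hσ ((3 : ℝ) • μv)
  rw [lda_error_sub_mda_error hσ hp1 hp2.le,
    probReal_compl_eq_one_sub (μ := gauss d ((3 : ℝ) • μv) σ)
      (measurableSet_mdaThreeRegion d μv σ p)]
  have hA := mul_gauss_neg_real_le hσ ((measurableSet_mdaNegRegion d μv σ p).diff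
    (measurableSet_ldaRegion μv p)) sdiff_subset
  have hB₁ := gauss_real_compl_mdaThreeRegion_le (μ := μv) hσ hp2.le
  have hB₃ := mul_gauss_three_smul_real_mdaThreeRegion_le (μ := μv) hσ hp2.le
  have hC₃ : (gauss d ((3 : ℝ) • μv) σ).real (mdaNegRegion d μv σ p \ ldaRegion μv p) ≤
      exp (-‖μv‖ ^ 2 / (2 * σ ^ 2)) :=
    (measureReal_mono (sdiff_subset_compl _ _)).trans
      (gauss_three_smul_real_compl_ldaRegion_le hσ hp1)
  have hε := (exp_pos (-‖μv‖ ^ 2 / (2 * σ ^ 2))).le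
  have hsqrt : √(1 - p) ≤ 3 / 4 := by
    rw [sqrt_le_left (by norm_num)]; linarith
  linarith [mul_nonneg (by linarith : 0 ≤ p)
      (measureReal_nonneg (μ := gauss d (-μv) σ) (s := (mdaThreeRegion d μv σ p)ᶜ)),
    mul_le_mul_of_nonneg_right hsqrt hε, mul_le_mul_of_nonneg_left hC₃ (sub_nonneg.2 hp2.le),
    mul_le_mul_of_nonneg_right (show 1 - p ≤ 1 / 2 by linarith) hε]

/-- The performance gap between the ideal LDA and MDA classifiers under the
Gaussian-mixture data model `D`. -/
theorem lda_mda_gap (d : ℕ) (hd : 1 ≤ d) (μv : EuclideanSpace ℝ (Fin d)) (hμ : μv ≠ 0)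
    (σ p : ℝ) (hσ : 0 < σ) (hp1 : 1 / 2 < p) (hp2 : p < 1) :
    ((Dmix d μv σ p) {z | hLDA d μv p z.1 ≠ z.2}).toReal
        - ((Dmix d μv σ p) {z | hMDA d μv σ p z.1 ≠ z.2}).toReal ≥
      (1 - p) / 2 - Real.exp (-‖μv‖ ^ 2 / (2 * σ ^ 2)) :=
  lda_mda_gap_general d μv σ p hσ hp1 hp2
end
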